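/- For a non-resonant ω ∈ ℝ^n and a weight φ with A_+^φ ≠ ∅: ω ∈ A_+^φ (i.e. ln(|2πk·ω|^{-1}) = o(φ(|k|))) if and only if for every f ∈ F_+^φ with f_0 = 0, the solution g (with g_0 = 0, g_k = (i2πk·ω)^{-1}f_k) belongs to F_+^φ. -/

import Mathlib

open scoped ENNReal
open Filter

noncomputable section

/-- sup-norm of a lattice vector `k ∈ ℤⁿ`, `|k| = max_i |k_i|`. -/
def knorm {n : ℕ} (k : Fin n → ℤ) : ℝ :=
  ((Finset.univ.sup fun i => (k i).natAbs : ℕ) : ℝ)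

/-- Euclidean pairing `k · ω`. -/
def dot {n : ℕ} (ω : Fin n → ℝ) (k : Fin n → ℤ) : ℝ := ∑ i, (k i : ℝ) * ω i

/-- Weighted sup-norm `‖f‖_r = sup_k |f_k| e^{r φ(|k|)}` (valued in `ℝ≥0∞`). -/
def fnorm {n : ℕ} (φ : ℝ → ℝ) (r : ℝ) (f : (Fin n → ℤ) → ℂ) : ℝ≥0∞ :=
  ⨆ k : Fin n → ℤ, ENNReal.ofReal (‖f k‖ * Real.exp (r * φ (knorm k)))

/-- `γ_τ⁻¹(ω) = sup_{k ≠ 0} |2π k·ω|⁻¹ e^{-τ φ(|k|)}` (valued in `ℝ≥0∞`). -/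
def gammaInv {n : ℕ} (φ : ℝ → ℝ) (τ : ℝ) (ω : Fin n → ℝ) : ℝ≥0∞ :=
  ⨆ k : {k : Fin n → ℤ // k ≠ 0},
    ENNReal.ofReal (|2 * Real.pi * dot ω (k : Fin n → ℤ)|⁻¹ *
      Real.exp (-τ * φ (knorm (k : Fin n → ℤ))))

/-- The normalized solution of the cohomological equation:
`g_0 = 0`, `g_k = (i 2π k·ω)⁻¹ f_k` for `k ≠ 0`. -/
def sol {n : ℕ} (ω : Fin n → ℝ) (f : (Fin n → ℤ) → ℂ) : (Fin n → ℤ) → ℂ :=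
  fun k => if k = 0 then 0 else (Complex.I * (2 * Real.pi * dot ω k))⁻¹ * f k

/-- A weight: continuous, vanishing at `0`, non-decreasing and non-negative on `[0,∞)`,
with `ln(1+t) = O(φ(t))`. -/
def IsWeight (φ : ℝ → ℝ) : Prop :=
  Continuous φ ∧ φ 0 = 0 ∧ MonotoneOn φ (Set.Ici 0) ∧ (∀ t, 0 ≤ t → 0 ≤ φ t) ∧
    ∃ C > (0 : ℝ), ∃ T : ℝ, ∀ t ≥ T, Real.log (1 + t) ≤ C * φ t

end

/-! A small divisor is harmless exactly when it costs at most a factor `e^{τ φ(|k|)}` for every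
`τ > 0`: then dividing by it moves a datum of class `F_r^φ` into `F_{r-τ}^φ`. Conversely, if
`γ_τ⁻¹(ω) = ∞`, the infinitely many `k` with `|2π k·ω| ≤ e^{-τ φ(|k|)}` carry a datum
`f_k = i 2π k·ω` of class `F_τ^φ` whose solution has `|g_k| = 1` on them; since `φ(|k|) → ∞`,
`g` lies in no `F_r^φ`. -/

lemma IsWeight.tendsto_atTop {φ : ℝ → ℝ} (hφ : IsWeight φ) : Tendsto φ atTop atTop := by
  obtain ⟨-, -, -, -, C, hC, T, hT⟩ := hφ
  have hlog : Tendsto (fun t => Real.log (1 + t) / C) atTop atTop :=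
    (Real.tendsto_log_atTop.comp (tendsto_atTop_add_const_left _ 1 tendsto_id)).atTop_div_const hC
  refine tendsto_atTop_mono' _ ?_ hlog
  filter_upwards [eventually_ge_atTop T] with t ht
  exact (div_le_iff₀' hC).2 (hT t ht)

lemma iSup_ofReal_ne_top_of_finite {ι : Type*} (g : ι → ℝ) (h : {i | 1 ≤ g i}.Finite) :
    ⨆ i, ENNReal.ofReal (g i) ≠ ⊤ := by
  obtain ⟨B, hB⟩ := (h.image g).bddAbove
  refine ne_top_of_le_ne_top (ENNReal.ofReal_ne_top (r := max 1 B))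
    (iSup_le fun i => ENNReal.ofReal_le_ofReal ?_)
  by_cases hi : 1 ≤ g i
  · exact (hB (Set.mem_image_of_mem g hi)).trans (le_max_right _ _)
  · exact (le_of_not_ge hi).trans (le_max_left _ _)

section Lattice

variable {n : ℕ}

lemma abs_le_knorm (k : Fin n → ℤ) (i : Fin n) : |(k i : ℝ)| ≤ knorm k := by
  rw [← Int.cast_abs, Int.abs_eq_natAbs, Int.cast_natCast, knorm]
  exact Nat.cast_le.2 (Finset.le_sup (f := fun i => (k i).natAbs) (Finset.mem_univ i))

lemma finite_setOf_knorm_le (R : ℝ) : {k : Fin n → ℤ | knorm k ≤ R}.Finite := by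
  refine (Set.Finite.pi fun _ => Set.finite_Icc (-(⌈R⌉₊ : ℤ)) ⌈R⌉₊).subset fun k hk i _ => ?_
  have hki : |(k i : ℝ)| ≤ ⌈R⌉₊ := (abs_le_knorm k i).trans (hk.trans (Nat.le_ceil R))
  rw [Set.mem_Icc, ← abs_le]
  exact_mod_cast hki

lemma Set.Infinite.exists_lt_knorm {S : Set (Fin n → ℤ)} (hS : S.Infinite) (R : ℝ) :
    ∃ k ∈ S, R < knorm k := by
  by_contra! h
  exact hS ((finite_setOf_knorm_le R).subset h)

lemma dot_zero (ω : Fin n → ℝ) : dot ω 0 = 0 := by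
  simp [dot]

end Lattice

section Solution

variable {n : ℕ} (φ : ℝ → ℝ) (ω : Fin n → ℝ)

lemma norm_I_mul_smallDivisor (k : Fin n → ℤ) :
    ‖Complex.I * (2 * Real.pi * dot ω k)‖ = |2 * Real.pi * dot ω k| := by
  rw [norm_mul, Complex.norm_I, one_mul, ← Real.norm_eq_abs, ← Complex.norm_real]
  push_cast
  rfl

lemma norm_sol (f : (Fin n → ℤ) → ℂ) (k : Fin n → ℤ) :
    ‖sol ω f k‖ = |2 * Real.pi * dot ω k|⁻¹ * ‖f k‖ := by
  by_cases hk : k = 0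
  · simp [sol, hk, dot_zero]
  · rw [sol, if_neg hk, norm_mul, norm_inv, norm_I_mul_smallDivisor]

lemma fnorm_sol_le (τ r : ℝ) (f : (Fin n → ℤ) → ℂ) :
    fnorm φ (r - τ) (sol ω f) ≤ gammaInv φ τ ω * fnorm φ r f := by
  refine iSup_le fun k => ?_
  by_cases hk : k = 0
  · simp [hk, sol]
  have hsplit : ‖sol ω f k‖ * Real.exp ((r - τ) * φ (knorm k)) =
      (|2 * Real.pi * dot ω k|⁻¹ * Real.exp (-τ * φ (knorm k))) *
        (‖f k‖ * Real.exp (r * φ (knorm k))) := by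
    rw [norm_sol, mul_mul_mul_comm, ← Real.exp_add]
    ring_nf
  rw [hsplit, ENNReal.ofReal_mul (by positivity)]
  exact mul_le_mul' (le_iSup_of_le (⟨k, hk⟩ : {k : Fin n → ℤ // k ≠ 0}) le_rfl)
    (le_iSup_of_le k le_rfl)

def smallDivisors (τ : ℝ) : Set (Fin n → ℤ) :=
  {k | k ≠ 0 ∧ 1 ≤ |2 * Real.pi * dot ω k|⁻¹ * Real.exp (-τ * φ (knorm k))}

lemma abs_pos_of_mem_smallDivisors {τ : ℝ} {k : Fin n → ℤ} (hk : k ∈ smallDivisors φ ω τ) :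
    0 < |2 * Real.pi * dot ω k| := by
  refine (abs_nonneg _).lt_of_ne fun h => ?_
  have h1 := hk.2
  rw [← h, inv_zero, zero_mul] at h1
  exact zero_lt_one.not_ge h1

lemma infinite_smallDivisors {τ : ℝ} (hτ : gammaInv φ τ ω = ⊤) :
    (smallDivisors φ ω τ).Infinite := fun hfin =>
  iSup_ofReal_ne_top_of_finite _ (hfin.preimage Subtype.val_injective.injOn |>.subset
    fun k hk => ⟨k.2, hk⟩) hτ

noncomputable def resonantDatum (τ : ℝ) : (Fin n → ℤ) → ℂ :=
  (smallDivisors φ ω τ).indicator fun k => Complex.I * (2 * Real.pi * dot ω k)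

lemma resonantDatum_zero (τ : ℝ) : resonantDatum φ ω τ 0 = 0 :=
  Set.indicator_of_notMem (fun h => h.1 rfl) _

lemma fnorm_resonantDatum_le_one (τ : ℝ) : fnorm φ τ (resonantDatum φ ω τ) ≤ 1 := by
  refine iSup_le fun k => ENNReal.ofReal_le_one.2 ?_
  by_cases hk : k ∈ smallDivisors φ ω τ
  · have hsmall : |2 * Real.pi * dot ω k| ≤ Real.exp (-τ * φ (knorm k)) :=
      (one_le_div (abs_pos_of_mem_smallDivisors φ ω hk)).1 (by rw [← inv_mul_eq_div]; exact hk.2)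
    calc ‖resonantDatum φ ω τ k‖ * Real.exp (τ * φ (knorm k))
        ≤ Real.exp (-τ * φ (knorm k)) * Real.exp (τ * φ (knorm k)) := by
          rw [resonantDatum, Set.indicator_of_mem hk, norm_I_mul_smallDivisor]
          gcongr
      _ = 1 := by rw [← Real.exp_add, neg_mul, neg_add_cancel, Real.exp_zero]
  · simp [resonantDatum, Set.indicator_of_notMem hk]

lemma norm_sol_resonantDatum {τ : ℝ} {k : Fin n → ℤ} (hk : k ∈ smallDivisors φ ω τ) :
    ‖sol ω (resonantDatum φ ω τ) k‖ = 1 := by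
  rw [norm_sol, resonantDatum, Set.indicator_of_mem hk, norm_I_mul_smallDivisor,
    inv_mul_cancel₀ (abs_pos_of_mem_smallDivisors φ ω hk).ne']

lemma fnorm_sol_resonantDatum_eq_top (hφ : IsWeight φ) {τ r : ℝ}
    (hS : (smallDivisors φ ω τ).Infinite) (hr : 0 < r) :
    fnorm φ r (sol ω (resonantDatum φ ω τ)) = ⊤ := by
  refine ENNReal.eq_top_of_forall_nnreal_le fun M => ?_
  obtain ⟨R, hR⟩ := (Real.tendsto_exp_atTop.comp (hφ.tendsto_atTop.const_mul_atTop hr)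
    |>.eventually_ge_atTop (M : ℝ)).exists_forall_of_atTop
  obtain ⟨k, hk, hRk⟩ := hS.exists_lt_knorm R
  refine le_iSup_of_le k ?_
  rw [norm_sol_resonantDatum φ ω hk, one_mul, ← ENNReal.ofReal_coe_nnreal]
  exact ENNReal.ofReal_le_ofReal (hR _ hRk.le)

end Solution

theorem stmt4_general {n : ℕ} (φ : ℝ → ℝ) (hφ : IsWeight φ)
    (ω : Fin n → ℝ) :
    (∀ τ : ℝ, 0 < τ → gammaInv φ τ ω ≠ ⊤) ↔
      (∀ f : (Fin n → ℤ) → ℂ, f 0 = 0 →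
        (∃ r : ℝ, 0 < r ∧ fnorm φ r f ≠ ⊤) →
        (∃ r : ℝ, 0 < r ∧ fnorm φ r (sol ω f) ≠ ⊤)) := by
  constructor
  · rintro hω f - ⟨r, hr, hf⟩
    refine ⟨r - r / 2, by linarith, ne_top_of_le_ne_top ?_ (fnorm_sol_le φ ω (r / 2) r f)⟩
    exact ENNReal.mul_ne_top (hω _ (half_pos hr)) hf
  · intro H τ hτ hγ
    obtain ⟨r, hr, hsol⟩ := H (resonantDatum φ ω τ) (resonantDatum_zero φ ω τ)
      ⟨τ, hτ, ne_top_of_le_ne_top ENNReal.one_ne_top (fnorm_resonantDatum_le_one φ ω τ)⟩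
    exact hsol (fnorm_sol_resonantDatum_eq_top φ ω hφ (infinite_smallDivisors φ ω hγ) hr)

/-- assuming `A_+^φ ≠ ∅`, `ω ∈ A_+^φ` iff the cohomological equation can
be solved in `F_+^φ`. -/
theorem stmt4 {n : ℕ} (φ : ℝ → ℝ) (hφ : IsWeight φ)
    (ω : Fin n → ℝ) (hnr : ∀ k : Fin n → ℤ, k ≠ 0 → dot ω k ≠ 0)
    (hne : ∃ ω' : Fin n → ℝ, ∀ τ : ℝ, 0 < τ → gammaInv φ τ ω' ≠ ⊤) :
    (∀ τ : ℝ, 0 < τ → gammaInv φ τ ω ≠ ⊤) ↔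
      (∀ f : (Fin n → ℤ) → ℂ, f 0 = 0 →
        (∃ r : ℝ, 0 < r ∧ fnorm φ r f ≠ ⊤) →
        (∃ r : ℝ, 0 < r ∧ fnorm φ r (sol ω f) ≠ ⊤)) :=
  stmt4_general φ hφ ω
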